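/- arXiv:0905.3268 — 7 statements merged into one kernel-verified Lean document; each statement's English description precedes it below -/
import Mathlib

section
/- For every n ≥ 4 and every i, the number d(C_n,i) of dominating sets of the cycle C_n of cardinality i satisfies d(C_n,i) = d(C_{n−1},i−1) + d(C_{n−2},i−1) + d(C_{n−3},i−1). -/
/-- The cycle graph `C_n` on vertex set `ZMod n`: two vertices are adjacent
iff they are distinct and differ by `1`. -/
def cycleG (n : ℕ) : SimpleGraph (ZMod n) where
  Adj u v := u ≠ v ∧ (u - v = 1 ∨ v - u = 1)
  symm := ⟨fun u v ⟨h1, h2⟩ => ⟨h1.symm, h2.symm⟩⟩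
  loopless := ⟨fun u ⟨h, _⟩ => h rfl⟩

/-- `S` is a dominating set of `G`: every vertex not in `S` is adjacent to a vertex of `S`. -/
def isDomSet {V : Type*} (G : SimpleGraph V) (S : Finset V) : Prop :=
  ∀ v, v ∉ S → ∃ u ∈ S, G.Adj u v

/-- `d(C_n, i)`: the number of dominating sets of `C_n` of cardinality `i`. -/
noncomputable def domCount (n i : ℕ) : ℕ :=
  Nat.card {S : Finset (ZMod n) // isDomSet (cycleG n) S ∧ S.card = i}

/-!
Read a vertex set of `C_n` as a set of residues `0, …, n-1`. Let `S` be a dominating set with at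
least two elements, `M` its largest element and `M'` the largest element of `S \ {M}`. The gap
`a = M - M'` is at most `3`, since otherwise vertex `M' + 2` is undominated, and `S \ {M}` is a
dominating set of `C_{n-a}`: shrinking the cycle by `a` closes the gap left by `M` and keeps the
wrap-around gap from the top element to the smallest one. Conversely, adding to a dominating set of
`C_{n-a}` a new largest element `a ≤ 3` steps above its maximum gives a dominating set of `C_n`, so
`S ↦ (a, S \ {M})` is a bijection. Sets with fewer than two elements dominate none of the cycles
involved, because a dominating set of `C_n` has at least `n / 3` elements.
-/

open Finset

namespace CycleDomination

theorem isDomSet_cycleG_iff {n : ℕ} (S : Finset (ZMod n)) :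
    isDomSet (cycleG n) S ↔ ∀ v : ZMod n, ∃ j : ℕ, j < 3 ∧ v + j ∈ S := by
  constructor
  · intro hS v
    by_cases hv : v + 1 ∈ S
    · exact ⟨1, by norm_num, by exact_mod_cast hv⟩
    obtain ⟨u, hu, -, huv | huv⟩ := hS (v + 1) hv
    · obtain rfl : u = v + 2 := by linear_combination huv
      exact ⟨2, by norm_num, by exact_mod_cast hu⟩
    · obtain rfl : u = v := by linear_combination -huv
      exact ⟨0, by norm_num, by simpa using hu⟩
  · intro hS v hv
    obtain ⟨j, hj, hjS⟩ := hS (v - 1)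
    have hne : ∀ u ∈ S, u ≠ v := fun u hu huv => hv (huv ▸ hu)
    interval_cases j
    · have hu : v - 1 ∈ S := by simpa using hjS
      exact ⟨v - 1, hu, hne _ hu, Or.inr (sub_sub_self v 1)⟩
    · exact absurd (by simpa using hjS) hv
    · have hu : v + 1 ∈ S := by convert hjS using 1; push_cast; ring
      exact ⟨v + 1, hu, hne _ hu, Or.inl (add_sub_cancel_left v 1)⟩

theorem le_three_mul_card {n : ℕ} [NeZero n] {S : Finset (ZMod n)}
    (hS : isDomSet (cycleG n) S) : n ≤ 3 * #S :=
  calc n = #(univ : Finset (ZMod n)) := (ZMod.card n).symm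
    _ ≤ #((S ×ˢ range 3).image fun p => p.1 - (p.2 : ZMod n)) := by
      refine card_le_card fun v _ => ?_
      obtain ⟨j, hj, hjS⟩ := (isDomSet_cycleG_iff S).mp hS v
      exact mem_image.mpr ⟨(v + j, j), by simp [hj, hjS], add_sub_cancel_right v _⟩
    _ ≤ #(S ×ˢ range 3) := card_image_le
    _ = 3 * #S := by rw [card_product, card_range, mul_comm]

theorem domCount_eq_zero_of_three_mul_lt {n i : ℕ} (h : 3 * i < n) : domCount n i = 0 := by
  have : NeZero n := ⟨by omega⟩
  rw [domCount, Nat.card_eq_zero]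
  exact Or.inl ⟨fun ⟨S, hS, hcard⟩ => by have := le_three_mul_card hS; omega⟩

/-- Domination of `C_n` in the form of `isDomSet_cycleG_iff`, for `T ⊆ {0, …, n-1}`; the second
disjunct is a step from `k` to `t` that wraps around the cycle. -/
def IsCyclicDom (n : ℕ) (T : Finset ℕ) : Prop :=
  ∀ k < n, ∃ t ∈ T, k ≤ t ∧ t ≤ k + 2 ∨ t + n ≤ k + 2

instance (n : ℕ) : DecidablePred (IsCyclicDom n) := fun _ => by
  unfold IsCyclicDom; infer_instance

def cyclicDomSets (n i : ℕ) : Finset (Finset ℕ) :=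
  ((range n).powersetCard i).filter (IsCyclicDom n)

theorem mem_cyclicDomSets {n i : ℕ} {T : Finset ℕ} :
    T ∈ cyclicDomSets n i ↔ (∀ t ∈ T, t < n) ∧ #T = i ∧ IsCyclicDom n T := by
  simp [cyclicDomSets, subset_iff, and_assoc]

theorem exists_add_mod_eq_iff {n k t : ℕ} (hk : k < n) (ht : t < n) :
    (∃ j < 3, (k + j) % n = t) ↔ k ≤ t ∧ t ≤ k + 2 ∨ t + n ≤ k + 2 := by
  constructor
  · rintro ⟨j, hj, rfl⟩
    have hdiv := Nat.mod_add_div (k + j) n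
    have : (k + j) / n < 3 := Nat.div_lt_of_lt_mul (by omega)
    interval_cases (k + j) / n <;> omega
  · rintro (⟨hkt, htk⟩ | htk)
    · exact ⟨t - k, by omega, by rw [Nat.add_sub_cancel' hkt, Nat.mod_eq_of_lt ht]⟩
    · refine ⟨t + n - k, by omega, ?_⟩
      rw [Nat.add_sub_cancel' (by omega), Nat.add_mod_right, Nat.mod_eq_of_lt ht]

theorem add_natCast_eq_iff {n : ℕ} [NeZero n] (v s : ZMod n) (j : ℕ) :
    v + j = s ↔ (v.val + j) % n = s.val := by
  rw [← (ZMod.val_injective n).eq_iff, ZMod.val_add, ZMod.val_natCast, Nat.add_mod_mod]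

theorem isDomSet_iff_isCyclicDom {n : ℕ} [NeZero n] (S : Finset (ZMod n)) :
    isDomSet (cycleG n) S ↔ IsCyclicDom n (S.image ZMod.val) := by
  have key (v : ZMod n) : (∃ j : ℕ, j < 3 ∧ v + j ∈ S) ↔
      ∃ s ∈ S, v.val ≤ s.val ∧ s.val ≤ v.val + 2 ∨ s.val + n ≤ v.val + 2 := by
    simp_rw [← exists_add_mod_eq_iff v.val_lt (ZMod.val_lt _), ← add_natCast_eq_iff]
    constructor
    · rintro ⟨j, hj, hjS⟩
      exact ⟨_, hjS, j, hj, rfl⟩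
    · rintro ⟨s, hs, j, hj, rfl⟩
      exact ⟨j, hj, hs⟩
  simp only [isDomSet_cycleG_iff, key, IsCyclicDom, exists_mem_image]
  constructor
  · intro h k hk
    simpa only [ZMod.val_cast_of_lt hk] using h k
  · exact fun h v => h v.val v.val_lt

theorem image_val_image_natCast {n : ℕ} {T : Finset ℕ} (hT : ∀ t ∈ T, t < n) :
    (T.image (Nat.cast : ℕ → ZMod n)).image ZMod.val = T := by
  rw [image_image]
  exact (image_congr fun t ht => ZMod.val_cast_of_lt (hT t ht)).trans image_id

theorem domCount_eq_card {n : ℕ} [NeZero n] (i : ℕ) : domCount n i = #(cyclicDomSets n i) := by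
  classical
  rw [domCount, Nat.card_eq_fintype_card, Fintype.card_subtype]
  refine card_nbij' (image ZMod.val) (image Nat.cast) (fun S hS => ?_) (fun T hT => ?_)
    (fun S _ => ?_) (fun T hT => image_val_image_natCast (mem_cyclicDomSets.mp hT).1)
  · obtain ⟨hdom, hcard⟩ := (mem_filter.mp hS).2
    refine mem_cyclicDomSets.mpr ⟨?_, ?_, (isDomSet_iff_isCyclicDom S).mp hdom⟩
    · simp [ZMod.val_lt]
    · rw [card_image_of_injective _ (ZMod.val_injective n), hcard]
  · obtain ⟨hlt, hcard, hdom⟩ := mem_cyclicDomSets.mp hT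
    refine mem_filter.mpr ⟨mem_univ _, ?_, ?_⟩
    · rwa [isDomSet_iff_isCyclicDom, image_val_image_natCast hlt]
    · rw [card_image_of_injOn, hcard]
      intro a ha b hb hab
      simpa [ZMod.val_cast_of_lt (hlt a ha), ZMod.val_cast_of_lt (hlt b hb)] using
        congrArg ZMod.val hab
  · simp [image_image, Function.comp_def]

def insertAbove (a : ℕ) (T : Finset ℕ) : Finset ℕ := insert (T.sup id + a) T

def topGap (S : Finset ℕ) : ℕ := S.sup id - (S.erase (S.sup id)).sup id

theorem sup_id_mem {α : Type*} [LinearOrder α] [OrderBot α] {T : Finset α} (hT : T.Nonempty) :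
    T.sup id ∈ T := by
  obtain ⟨t, ht, he⟩ := exists_mem_eq_sup T hT id
  exact he ▸ ht

theorem le_sup_id {α : Type*} [SemilatticeSup α] [OrderBot α] {T : Finset α} {t : α}
    (ht : t ∈ T) : t ≤ T.sup id :=
  le_sup (f := id) ht

theorem sup_insertAbove {a : ℕ} (ha : 1 ≤ a) (T : Finset ℕ) :
    (insertAbove a T).sup id = T.sup id + a := by
  rw [insertAbove, sup_insert, id, sup_eq_left]
  omega

theorem card_insertAbove {a : ℕ} (ha : 1 ≤ a) (T : Finset ℕ) :
    #(insertAbove a T) = #T + 1 :=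
  card_insert_of_notMem fun h => by have := le_sup_id h; omega

theorem erase_insertAbove {a : ℕ} (ha : 1 ≤ a) (T : Finset ℕ) :
    (insertAbove a T).erase (T.sup id + a) = T :=
  erase_insert fun h => by have := le_sup_id h; omega

theorem topGap_insertAbove {a : ℕ} (ha : 1 ≤ a) (T : Finset ℕ) :
    topGap (insertAbove a T) = a := by
  rw [topGap, sup_insertAbove ha, erase_insertAbove ha]
  omega

theorem erase_sup_nonempty {S : Finset ℕ} (hS : 1 < #S) : (S.erase (S.sup id)).Nonempty := by
  rw [← card_pos, card_erase_of_mem (sup_id_mem (card_pos.mp (by omega)))]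
  omega

theorem one_le_topGap {S : Finset ℕ} (hS : 1 < #S) : 1 ≤ topGap S := by
  have hmem := sup_id_mem (erase_sup_nonempty hS)
  have hlt : (S.erase (S.sup id)).sup id < S.sup id :=
    lt_of_le_of_ne (le_sup_id (mem_of_mem_erase hmem)) (ne_of_mem_erase hmem)
  rw [topGap]
  omega

theorem insertAbove_topGap {S : Finset ℕ} (hS : S.Nonempty) :
    insertAbove (topGap S) (S.erase (S.sup id)) = S := by
  rw [insertAbove, topGap, Nat.add_sub_cancel' (sup_mono (erase_subset _ _)),
    insert_erase (sup_id_mem hS)]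

theorem isCyclicDom_insertAbove_iff {n a : ℕ} {T : Finset ℕ} (hT : T.Nonempty) (ha : 1 ≤ a)
    (hn : T.sup id + a < n) :
    IsCyclicDom n (insertAbove a T) ↔ a ≤ 3 ∧ IsCyclicDom (n - a) T := by
  set m := T.sup id
  have hm : m ∈ T := sup_id_mem hT
  have hle (t : ℕ) (ht : t ∈ T) : t ≤ m := le_sup_id ht
  simp only [IsCyclicDom, insertAbove, exists_mem_insert]
  constructor
  · -- wherever the removed top `m + a` covers `k` (or `k + a`), so does `m`
    intro h
    refine ⟨?_, fun k hk => ?_⟩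
    · rcases h (m + 1) (by omega) with hM | ⟨t, ht, hcov⟩
      · omega
      · have := hle t ht; omega
    · by_cases hkm : k ≤ m
      · rcases h k (by omega) with hM | ⟨t, ht, hcov⟩
        · exact ⟨m, hm, by omega⟩
        · exact ⟨t, ht, by omega⟩
      · rcases h (k + a) (by omega) with hM | ⟨t, ht, hcov⟩
        · exact ⟨m, hm, by omega⟩
        · have := hle t ht; exact ⟨t, ht, by omega⟩
  · rintro ⟨ha3, h⟩ k hk
    by_cases hkm : k ≤ m
    · obtain ⟨t, ht, hcov | hcov⟩ := h k (by omega)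
      · exact Or.inr ⟨t, ht, Or.inl hcov⟩
      · exact Or.inr ⟨m, hm, by omega⟩
    by_cases hkM : k ≤ m + a
    · exact Or.inl (by omega)
    obtain ⟨t, ht, hcov⟩ := h (k - a) (by omega)
    have := hle t ht
    exact Or.inr ⟨t, ht, by omega⟩

theorem insertAbove_mem_cyclicDomSets_iff {n i a : ℕ} {T : Finset ℕ} (hT : T.Nonempty)
    (ha : 1 ≤ a) :
    insertAbove a T ∈ cyclicDomSets n (i + 1) ↔ a ≤ 3 ∧ T ∈ cyclicDomSets (n - a) i := by
  simp only [mem_cyclicDomSets, card_insertAbove ha, add_left_inj]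
  constructor
  · rintro ⟨hlt, rfl, hdom⟩
    have hn : T.sup id + a < n := hlt _ (mem_insert_self _ _)
    obtain ⟨ha3, hdom'⟩ := (isCyclicDom_insertAbove_iff hT ha hn).mp hdom
    exact ⟨ha3, fun t ht => by have := le_sup_id ht; omega, rfl, hdom'⟩
  · rintro ⟨ha3, hlt, rfl, hdom⟩
    have hn : T.sup id + a < n := by have := hlt _ (sup_id_mem hT); omega
    refine ⟨fun t ht => ?_, rfl, (isCyclicDom_insertAbove_iff hT ha hn).mpr ⟨ha3, hdom⟩⟩
    rcases mem_insert.mp ht with rfl | ht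
    · exact hn
    · have := hlt t ht; omega

theorem card_cyclicDomSets (n : ℕ) {i : ℕ} (hi : 2 ≤ i) :
    #(cyclicDomSets n i) = ∑ a ∈ Icc 1 3, #(cyclicDomSets (n - a) (i - 1)) := by
  obtain ⟨i, rfl⟩ : ∃ j, i = j + 1 := ⟨i - 1, by omega⟩
  rw [← card_sigma, add_tsub_cancel_right]
  have one_lt_card {S : Finset ℕ} (hS : S ∈ cyclicDomSets n (i + 1)) : 1 < #S := by
    rw [(mem_cyclicDomSets.mp hS).2.1]; omega
  refine card_nbij' (fun S => ⟨topGap S, S.erase (S.sup id)⟩) (fun p => insertAbove p.1 p.2)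
    (fun S hS => ?_) (fun p hp => ?_) (fun S hS => ?_) (fun p hp => ?_)
  · have hcard := one_lt_card hS
    have hgap := one_le_topGap hcard
    rw [← insertAbove_topGap (S := S) (card_pos.mp (by omega))] at hS
    obtain ⟨ha3, hT⟩ := (insertAbove_mem_cyclicDomSets_iff (erase_sup_nonempty hcard) hgap).mp hS
    exact mem_sigma.mpr ⟨mem_Icc.mpr ⟨hgap, ha3⟩, hT⟩
  · obtain ⟨ha, hT⟩ := mem_sigma.mp hp
    have hTne : p.2.Nonempty := card_pos.mp (by rw [(mem_cyclicDomSets.mp hT).2.1]; omega)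
    exact (insertAbove_mem_cyclicDomSets_iff hTne (mem_Icc.mp ha).1).mpr ⟨(mem_Icc.mp ha).2, hT⟩
  · exact insertAbove_topGap (card_pos.mp (by have := one_lt_card hS; omega))
  · obtain ⟨a, T⟩ := p
    have ha : 1 ≤ a := (mem_Icc.mp (mem_sigma.mp hp).1).1
    simp only [topGap_insertAbove ha, sup_insertAbove ha, erase_insertAbove ha]

end CycleDomination

open CycleDomination

theorem domCount_recurrence (n : ℕ) (hn : 4 ≤ n) (i : ℕ) :
    domCount n i = domCount (n - 1) (i - 1) + domCount (n - 2) (i - 1)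
      + domCount (n - 3) (i - 1) := by
  rcases lt_or_ge i 2 with hi | hi
  · have hzero (a : ℕ) (ha : a ≤ 3) : domCount (n - a) (i - 1) = 0 :=
      domCount_eq_zero_of_three_mul_lt (by omega)
    rw [domCount_eq_zero_of_three_mul_lt (by omega), hzero 1 (by norm_num), hzero 2 (by norm_num),
      hzero 3 (by norm_num)]
  have hcard (a : ℕ) (ha : a ≤ 3) :
      domCount (n - a) (i - 1) = #(cyclicDomSets (n - a) (i - 1)) :=
    have : NeZero (n - a) := ⟨by omega⟩
    domCount_eq_card _
  have : NeZero n := ⟨by omega⟩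
  rw [domCount_eq_card, card_cyclicDomSets n hi, hcard 1 (by norm_num), hcard 2 (by norm_num),
    hcard 3 (by norm_num), sum_Icc_succ_top (by norm_num), sum_Icc_succ_top (by norm_num),
    Icc_self, sum_singleton]
end

section
/- For every n ≥ 1, the cycle C_{3n} has exactly 3 dominating sets of cardinality n. -/
/-!
A dominating set `S` of `C_m` with `3 * #S ≤ m` is a perfect code: closed neighbourhoods have
three vertices, so `∑ v, #(S ∩ N[v]) = 3 * #S ≤ m`, while domination makes every summand at
least `1`; hence every summand is exactly `1`. In a perfect code `u ∈ S` forces `u + 3 ∈ S`, so a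
dominating set of size `n` in `C_{3n}` contains, and by counting equals, a residue class
mod `3`; conversely each of the three residue classes dominates.
-/

open Finset

namespace ZMod

lemma natCast_ne_zero_of_lt {m k : ℕ} (hk : 0 < k) (hkm : k < m) :
    (k : ZMod m) ≠ 0 := by
  rw [Ne, natCast_eq_zero_iff]
  exact fun h => absurd (Nat.le_of_dvd hk h) (by omega)

lemma exists_eq_add_mul_of_castHom_eq {d m : ℕ} [NeZero m] (hdm : d ∣ m)
    {u v : ZMod m} (h : castHom hdm (ZMod d) v = castHom hdm (ZMod d) u) :
    ∃ k : ℕ, v = u + d * k := by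
  have hval : ((v - u).val : ZMod d) = 0 := by
    rw [← map_natCast (castHom hdm (ZMod d)), natCast_zmod_val, map_sub, h, sub_self]
  obtain ⟨k, hk⟩ := (natCast_eq_zero_iff _ _).1 hval
  refine ⟨k, ?_⟩
  rw [← Nat.cast_mul, ← hk, natCast_zmod_val]
  ring

lemma card_castHom_fiber_mul {d m : ℕ} [NeZero m] (hdm : d ∣ m) (r : ZMod d) :
    #{v : ZMod m | castHom hdm (ZMod d) v = r} * d = m := by
  have : NeZero d := ⟨by rintro rfl; exact NeZero.ne m (zero_dvd_iff.1 hdm)⟩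
  set f := castHom hdm (ZMod d)
  have hfiber (s : ZMod d) : #{v | f v = s} = #{v | f v = r} :=
    AddMonoidHom.card_fiber_eq_of_mem_range f (castHom_surjective hdm s)
      (castHom_surjective hdm r)
  calc #{v | f v = r} * d = ∑ s : ZMod d, #{v | f v = s} := by
        rw [sum_congr rfl fun s _ => hfiber s, sum_const, card_univ, ZMod.card, smul_eq_mul,
          mul_comm]
    _ = m := by
        rw [← card_eq_sum_card_fiberwise fun _ _ => mem_univ _, card_univ, ZMod.card]

end ZMod

namespace CycleDomination

section Neighbourhood

variable {m : ℕ}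

def closedNbhd (v : ZMod m) : Finset (ZMod m) := {v - 1, v, v + 1}

lemma mem_closedNbhd {u v : ZMod m} : u ∈ closedNbhd v ↔ u = v - 1 ∨ u = v ∨ u = v + 1 := by
  simp [closedNbhd]

lemma mem_closedNbhd_comm {u v : ZMod m} : u ∈ closedNbhd v ↔ v ∈ closedNbhd u := by
  simp only [mem_closedNbhd]
  grind

lemma isDomSet_cycleG_iff_s4 (S : Finset (ZMod m)) :
    isDomSet (cycleG m) S ↔ ∀ v, (S ∩ closedNbhd v).Nonempty := by
  refine ⟨fun hS v => ?_, fun hS v hv => ?_⟩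
  · by_cases hv : v ∈ S
    · exact ⟨v, mem_inter.2 ⟨hv, mem_closedNbhd.2 (Or.inr (Or.inl rfl))⟩⟩
    obtain ⟨u, hu, -, huv | hvu⟩ : ∃ u ∈ S, (cycleG m).Adj u v := hS v hv
    · exact ⟨u, mem_inter.2 ⟨hu, mem_closedNbhd.2 (Or.inr (Or.inr (by rw [← huv]; ring)))⟩⟩
    · exact ⟨u, mem_inter.2 ⟨hu, mem_closedNbhd.2 (Or.inl (by rw [← hvu]; ring))⟩⟩
  · obtain ⟨u, hu⟩ := hS v
    obtain ⟨huS, hu⟩ := mem_inter.1 hu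
    refine ⟨u, huS, fun h => hv (h ▸ huS), ?_⟩
    rcases mem_closedNbhd.1 hu with rfl | rfl | rfl
    · exact Or.inr (by ring)
    · exact absurd huS hv
    · exact Or.inl (by ring)

lemma card_closedNbhd (hm : 2 < m) (v : ZMod m) : #(closedNbhd v) = 3 := by
  have h1 : (1 : ZMod m) ≠ 0 := mod_cast ZMod.natCast_ne_zero_of_lt one_pos (by omega)
  have h2 : (2 : ZMod m) ≠ 0 := mod_cast ZMod.natCast_ne_zero_of_lt two_pos hm
  rw [closedNbhd, card_insert_of_notMem, card_pair]
  · exact fun h => h1 (by linear_combination -h)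
  · simp only [mem_insert, mem_singleton, not_or]
    exact ⟨fun h => h1 (by linear_combination -h), fun h => h2 (by linear_combination -h)⟩

lemma add_three_mem (hm : 2 < m) {S : Finset (ZMod m)}
    (hS : ∀ v, #(S ∩ closedNbhd v) = 1) {u : ZMod m} (hu : u ∈ S) : u + 3 ∈ S := by
  have h1 : (1 : ZMod m) ≠ 0 := mod_cast ZMod.natCast_ne_zero_of_lt one_pos (by omega)
  have h2 : (2 : ZMod m) ≠ 0 := mod_cast ZMod.natCast_ne_zero_of_lt two_pos hm
  -- `u`, `u + 1`, `u + 2` all lie in `N[u + 1]`, so `N[u + 2]` can meet `S` only in `u + 3`.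
  have hu_only : ∀ a ∈ closedNbhd (u + 1), a ∈ S → a = u := fun a ha haS =>
    card_le_one.1 (hS (u + 1)).le a (mem_inter.2 ⟨haS, ha⟩) u
      (mem_inter.2 ⟨hu, mem_closedNbhd.2 (Or.inl (by ring))⟩)
  have hu1 : u + 1 ∉ S := fun h =>
    add_ne_left.2 h1 (hu_only _ (mem_closedNbhd.2 (Or.inr (Or.inl rfl))) h)
  have hu2 : u + 2 ∉ S := fun h =>
    add_ne_left.2 h2 (hu_only _ (mem_closedNbhd.2 (Or.inr (Or.inr (by ring)))) h)
  obtain ⟨w, hw⟩ := card_pos.1 ((hS (u + 2)).symm ▸ one_pos)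
  obtain ⟨hwS, hw⟩ := mem_inter.1 hw
  rcases mem_closedNbhd.1 hw with rfl | rfl | rfl
  · exact absurd (show u + 1 ∈ S by convert hwS using 1; ring) hu1
  · exact absurd hwS hu2
  · convert hwS using 1; ring

lemma add_three_mul_mem (hm : 2 < m) {S : Finset (ZMod m)}
    (hS : ∀ v, #(S ∩ closedNbhd v) = 1) {u : ZMod m} (hu : u ∈ S) (k : ℕ) :
    u + 3 * k ∈ S := by
  induction k with
  | zero => simpa using hu
  | succ k ih => simpa [mul_add, ← add_assoc] using add_three_mem hm hS ih

variable [NeZero m]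

lemma sum_card_inter_closedNbhd (hm : 2 < m) (S : Finset (ZMod m)) :
    ∑ v, #(S ∩ closedNbhd v) = 3 * #S := by
  calc ∑ v, #(S ∩ closedNbhd v) = ∑ v, ∑ u ∈ S, if u ∈ closedNbhd v then 1 else 0 := by
        simp only [← filter_mem_eq_inter, card_filter]
    _ = ∑ u ∈ S, ∑ v, if v ∈ closedNbhd u then 1 else 0 := by
        rw [sum_comm]; simp only [mem_closedNbhd_comm]
    _ = ∑ u ∈ S, 3 := by
        refine sum_congr rfl fun u _ => ?_
        simp only [sum_boole, filter_mem_eq_inter, univ_inter, card_closedNbhd hm, Nat.cast_ofNat]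
    _ = 3 * #S := by rw [sum_const, smul_eq_mul, mul_comm]

lemma card_inter_closedNbhd_eq_one (hm : 2 < m) {S : Finset (ZMod m)}
    (hS : isDomSet (cycleG m) S) (hcard : 3 * #S ≤ m) (v : ZMod m) :
    #(S ∩ closedNbhd v) = 1 := by
  have hpos : ∀ v ∈ univ, 1 ≤ #(S ∩ closedNbhd v) :=
    fun v _ => card_pos.2 ((isDomSet_cycleG_iff_s4 S).1 hS v)
  have hsum : ∑ v : ZMod m, 1 = ∑ v, #(S ∩ closedNbhd v) := by
    refine le_antisymm (sum_le_sum hpos) ?_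
    rwa [sum_card_inter_closedNbhd hm, sum_const, card_univ, ZMod.card, smul_eq_mul, mul_one]
  exact ((sum_eq_sum_iff_of_le hpos).1 hsum v (mem_univ v)).symm

end Neighbourhood

section ResidueClasses

variable (n : ℕ) [NeZero n]

def residueClass (r : ZMod 3) : Finset (ZMod (3 * n)) :=
  {v | ZMod.castHom (dvd_mul_right 3 n) (ZMod 3) v = r}

variable {n}

lemma mem_residueClass {r : ZMod 3} {v : ZMod (3 * n)} :
    v ∈ residueClass n r ↔ ZMod.castHom (dvd_mul_right 3 n) (ZMod 3) v = r := by
  simp only [residueClass, mem_filter, mem_univ, true_and]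

lemma card_residueClass (r : ZMod 3) : #(residueClass n r) = n := by
  have := ZMod.card_castHom_fiber_mul (dvd_mul_right 3 n) r
  rw [← residueClass] at this
  omega

lemma residueClass_injective : Function.Injective (residueClass n) := by
  intro r s h
  have hr : ((r.val : ℕ) : ZMod (3 * n)) ∈ residueClass n r := by
    rw [mem_residueClass, map_natCast, ZMod.natCast_zmod_val]
  rwa [h, mem_residueClass, map_natCast, ZMod.natCast_zmod_val] at hr

lemma isDomSet_residueClass (r : ZMod 3) : isDomSet (cycleG (3 * n)) (residueClass n r) := by
  set f := ZMod.castHom (dvd_mul_right 3 n) (ZMod 3)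
  rw [isDomSet_cycleG_iff_s4]
  intro v
  obtain h | h | h : f v - r = 0 ∨ f v - r = 1 ∨ f v - r = 2 := by
    generalize f v - r = x; revert x; decide
  · exact ⟨v, mem_inter.2 ⟨mem_residueClass.2 (sub_eq_zero.1 h),
      mem_closedNbhd.2 (Or.inr (Or.inl rfl))⟩⟩
  · refine ⟨v - 1, mem_inter.2 ⟨mem_residueClass.2 ?_, mem_closedNbhd.2 (Or.inl rfl)⟩⟩
    rw [map_sub, map_one]
    linear_combination h
  · refine ⟨v + 1, mem_inter.2 ⟨mem_residueClass.2 ?_, mem_closedNbhd.2 (Or.inr (Or.inr rfl))⟩⟩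
    rw [map_add, map_one]
    have h3 : (3 : ZMod 3) = 0 := rfl
    linear_combination h + h3

lemma eq_residueClass_of_isDomSet {S : Finset (ZMod (3 * n))}
    (hS : isDomSet (cycleG (3 * n)) S) (hcard : #S = n) : ∃ r, S = residueClass n r := by
  have hm : 2 < 3 * n := by have := NeZero.pos n; omega
  have hperfect := card_inter_closedNbhd_eq_one hm hS (by rw [hcard])
  obtain ⟨u, hu⟩ := card_pos.1 (hcard ▸ NeZero.pos n)
  refine ⟨ZMod.castHom (dvd_mul_right 3 n) (ZMod 3) u, (eq_of_subset_of_card_le ?_ ?_).symm⟩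
  · intro v hv
    obtain ⟨k, rfl⟩ := ZMod.exists_eq_add_mul_of_castHom_eq _ (mem_residueClass.1 hv)
    exact_mod_cast add_three_mul_mem hm hperfect hu k
  · rw [hcard, card_residueClass]

end ResidueClasses

end CycleDomination

open CycleDomination

theorem domCount_three_n (n : ℕ) (hn : 1 ≤ n) : domCount (3 * n) n = 3 := by
  have : NeZero n := ⟨by omega⟩
  let residueDomSet (r : ZMod 3) :
      {S : Finset (ZMod (3 * n)) // isDomSet (cycleG (3 * n)) S ∧ S.card = n} :=
    ⟨residueClass n r, isDomSet_residueClass r, card_residueClass r⟩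
  have hbij : Function.Bijective residueDomSet := by
    refine ⟨fun r s h => residueClass_injective (congrArg Subtype.val h), ?_⟩
    rintro ⟨S, hS, hcard⟩
    obtain ⟨r, rfl⟩ := eq_residueClass_of_isDomSet hS hcard
    exact ⟨r, rfl⟩
  rw [domCount, ← Nat.card_congr (Equiv.ofBijective _ hbij), Nat.card_zmod]
end

section
/- For every n ≥ 1, the number of dominating sets of the cycle C_{3n+2} of cardinality n+1 equals 3n+2. -/
/-! Summing over the vertices `v` the number of elements of `S` among `v - 1, v, v + 1` gives
`3 * #S = (3n + 2) + 1`. If `S` dominates, every term is at least `1`, so exactly one vertex `w`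
is dominated twice. Hence no two elements of `S` are adjacent, `w ± 1 ∈ S`, and every other
`x ∈ S` has `x + 2 ∉ S`, so `x + 3 ∈ S` by domination of `x + 2`. Thus `S` is the translate
`{w + 1, w + 4, …, w + 1 + 3n}` of the multiples of `3`, and distinct `w` give distinct sets. -/

open Finset

theorem Fintype.existsUnique_two_le_of_sum_eq_card_add_one {α : Type*} [Fintype α]
    [DecidableEq α] {f : α → ℕ} (hf : ∀ a, 1 ≤ f a) (hsum : ∑ a, f a = Fintype.card α + 1) :
    ∃! a, 2 ≤ f a := by
  obtain ⟨a, ha⟩ : ∃ a, 2 ≤ f a := by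
    by_contra! h
    have : ∑ a, f a ≤ ∑ _a : α, 1 := sum_le_sum fun a _ => Nat.le_of_lt_succ (h a)
    simp only [sum_const, card_univ, smul_eq_mul, mul_one] at this
    omega
  refine ⟨a, ha, fun b hb => ?_⟩
  by_contra hba
  have hle : ∀ x, 1 + (if x = a then 1 else 0) + (if x = b then 1 else 0) ≤ f x := by
    intro x
    split_ifs <;> subst_vars <;> grind
  have := sum_le_sum fun x (_ : x ∈ univ) => hle x
  simp only [sum_add_distrib, sum_ite_eq', sum_const, card_univ, smul_eq_mul, mul_one] at this
  omega

section Cover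

variable {R : Type*} [Ring R] [Fintype R] [DecidableEq R]

/-- Elements of `S` among `v - 1, v, v + 1`, counted with multiplicity (these need not be
distinct, e.g. in `ZMod 2`), so that summing over `v` gives exactly `3 * #S`. -/
def closedNbhdCount (S : Finset R) (v : R) : ℕ :=
  (if v - 1 ∈ S then 1 else 0) + (if v ∈ S then 1 else 0) + (if v + 1 ∈ S then 1 else 0)

theorem sum_ite_add_mem (S : Finset R) (c : R) : ∑ v, (if v + c ∈ S then 1 else 0) = #S := by
  rw [Fintype.sum_equiv (Equiv.addRight c) (fun v => if v + c ∈ S then 1 else 0)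
    (fun v => if v ∈ S then 1 else 0) fun _ => rfl]
  simp

theorem sum_closedNbhdCount (S : Finset R) : ∑ v, closedNbhdCount S v = 3 * #S := by
  have h := sum_ite_add_mem S
  simp only [closedNbhdCount, sum_add_distrib, sub_eq_add_neg]
  rw [h, h, ← h 0]
  simp only [add_zero]
  ring

end Cover

section Cycle

variable {m : ℕ} [Fact (1 < m)] {S : Finset (ZMod m)}

theorem exists_mem_cycleG_adj_iff {v : ZMod m} :
    (∃ u ∈ S, (cycleG m).Adj u v) ↔ v - 1 ∈ S ∨ v + 1 ∈ S := by
  constructor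
  · rintro ⟨u, hu, -, h | h⟩
    · right; rwa [show v + 1 = u by linear_combination -h]
    · left; rwa [show v - 1 = u by linear_combination h]
  · rintro (h | h)
    · exact ⟨_, h, by simp, Or.inr (by ring)⟩
    · exact ⟨_, h, by simp, Or.inl (by ring)⟩

theorem isDomSet_cycleG_iff : isDomSet (cycleG m) S ↔ ∀ v, v ∈ S ∨ v - 1 ∈ S ∨ v + 1 ∈ S := by
  simp only [isDomSet, exists_mem_cycleG_adj_iff, or_iff_not_imp_left]

end Cycle

instance (n : ℕ) : Fact (1 < 3 * n + 2) := ⟨by omega⟩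

section DominatingSets

variable {n : ℕ} {S : Finset (ZMod (3 * n + 2))}
  (hS : isDomSet (cycleG (3 * n + 2)) S) (hcard : #S = n + 1)
include hS hcard

theorem existsUnique_two_le_closedNbhdCount : ∃! w, 2 ≤ closedNbhdCount S w := by
  refine Fintype.existsUnique_two_le_of_sum_eq_card_add_one (fun v => ?_) ?_
  · rcases isDomSet_cycleG_iff.mp hS v with h | h | h <;>
      (simp only [closedNbhdCount, if_pos h]; omega)
  · rw [sum_closedNbhdCount, hcard, ZMod.card]
    ring

theorem add_one_notMem {x : ZMod (3 * n + 2)} (hx : x ∈ S) : x + 1 ∉ S := by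
  intro hx1
  have h₀ : 2 ≤ closedNbhdCount S x := by simp [closedNbhdCount, hx, hx1]
  have h₁ : 2 ≤ closedNbhdCount S (x + 1) := by simp [closedNbhdCount, hx, hx1]
  have := (existsUnique_two_le_closedNbhdCount hS hcard).unique h₀ h₁
  simp at this

theorem existsUnique_mem_add_two_mem : ∃! x, x ∈ S ∧ x + 2 ∈ S := by
  obtain ⟨w, hw, hw_unique⟩ := existsUnique_two_le_closedNbhdCount hS hcard
  have hgap {x} (hx : x ∈ S) (hx2 : x + 2 ∈ S) : x + 1 = w := by
    refine hw_unique _ ?_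
    simp [closedNbhdCount, hx, show x + 1 + 1 = x + 2 by ring, hx2]
  have hwS : w ∉ S := fun hwS => by
    have h₁ : w + 1 ∉ S := add_one_notMem hS hcard hwS
    have h₂ : w - 1 ∉ S := fun h => add_one_notMem hS hcard h (by simpa using hwS)
    simp [closedNbhdCount, hwS, h₁, h₂] at hw
  have hw₁ : w - 1 ∈ S ∧ w + 1 ∈ S := by
    by_cases h₁ : w - 1 ∈ S <;> by_cases h₂ : w + 1 ∈ S <;>
      simp [closedNbhdCount, hwS, h₁, h₂] at hw ⊢
  refine ⟨w - 1, ⟨hw₁.1, by rw [show w - 1 + 2 = w + 1 by ring]; exact hw₁.2⟩, ?_⟩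
  rintro x ⟨hx, hx2⟩
  rw [← hgap hx hx2]
  ring

theorem add_three_mem {y : ZMod (3 * n + 2)} (hy : y ∈ S) (hy2 : y + 2 ∉ S) : y + 3 ∈ S := by
  rcases isDomSet_cycleG_iff.mp hS (y + 2) with h | h | h
  · exact absurd h hy2
  · exact absurd (by rwa [show y + 2 - 1 = y + 1 by ring] at h) (add_one_notMem hS hcard hy)
  · rwa [show y + 2 + 1 = y + 3 by ring] at h

end DominatingSets

section EveryThird

variable {n : ℕ} {a x : ZMod (3 * n + 2)}

def everyThird (n : ℕ) (a : ZMod (3 * n + 2)) : Finset (ZMod (3 * n + 2)) :=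
  (range (n + 1)).image fun j : ℕ => a + 3 * (j : ZMod (3 * n + 2))

theorem mem_everyThird : x ∈ everyThird n a ↔ ∃ j ≤ n, a + 3 * j = x := by
  simp [everyThird]

theorem card_everyThird : #(everyThird n a) = n + 1 := by
  rw [everyThird, card_image_of_injOn, card_range]
  intro j hj k hk h
  simp only [coe_range, Set.mem_Iio] at hj hk
  have h' := (ZMod.natCast_eq_natCast_iff' (3 * j) (3 * k) (3 * n + 2)).mp
    (by push_cast; linear_combination h)
  rw [Nat.mod_eq_of_lt, Nat.mod_eq_of_lt] at h' <;> omega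

theorem self_mem_everyThird : a ∈ everyThird n a :=
  mem_everyThird.mpr ⟨0, Nat.zero_le n, by simp⟩

theorem sub_two_mem_everyThird : a - 2 ∈ everyThird n a := by
  have h := ZMod.natCast_self (3 * n + 2)
  push_cast at h
  exact mem_everyThird.mpr ⟨n, le_rfl, by linear_combination h⟩

theorem isDomSet_everyThird : isDomSet (cycleG (3 * n + 2)) (everyThird n a) := by
  refine isDomSet_cycleG_iff.mpr fun v => ?_
  obtain ⟨t, ht, rfl⟩ : ∃ t < 3 * n + 2, a + t = v := ⟨(v - a).val, ZMod.val_lt _, by simp⟩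
  have hj : (t + 1) / 3 ≤ n := by omega
  have hdiv := congrArg (Nat.cast : ℕ → ZMod (3 * n + 2)) (Nat.div_add_mod (t + 1) 3).symm
  push_cast at hdiv
  have hmem : a + 3 * ((t + 1) / 3 : ℕ) ∈ everyThird n a := mem_everyThird.mpr ⟨_, hj, rfl⟩
  rcases (by omega : (t + 1) % 3 = 0 ∨ (t + 1) % 3 = 1 ∨ (t + 1) % 3 = 2) with hr | hr | hr <;>
    rw [hr] at hdiv <;> push_cast at hdiv
  · exact .inr <| .inr <| by convert hmem using 1; linear_combination hdiv
  · exact .inl <| by convert hmem using 1; linear_combination hdiv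
  · exact .inr <| .inl <| by convert hmem using 1; linear_combination hdiv

end EveryThird

theorem everyThird_injective {n : ℕ} : Function.Injective (everyThird n) := by
  intro a b hab
  have hgap (c : ZMod (3 * n + 2)) : c - 2 ∈ everyThird n c ∧ c - 2 + 2 ∈ everyThird n c :=
    ⟨sub_two_mem_everyThird, by simpa using self_mem_everyThird⟩
  exact sub_left_injective <| (existsUnique_mem_add_two_mem isDomSet_everyThird
    card_everyThird).unique (hab ▸ hgap a) (hgap b)

theorem eq_everyThird {n : ℕ} {S : Finset (ZMod (3 * n + 2))}
    (hS : isDomSet (cycleG (3 * n + 2)) S) (hcard : #S = n + 1) {x : ZMod (3 * n + 2)}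
    (hx : x ∈ S) (hx2 : x + 2 ∈ S) : S = everyThird n (x + 2) := by
  have hchain : ∀ j ≤ n, x + 2 + 3 * (j : ZMod (3 * n + 2)) ∈ S := by
    intro j hj
    induction j with
    | zero => simpa using hx2
    | succ j ih =>
      have hy := ih (by omega)
      have hyx : x + 2 + 3 * (j : ZMod (3 * n + 2)) ≠ x := fun h => by
        have h0 : ((3 * j + 2 : ℕ) : ZMod (3 * n + 2)) = 0 := by
          push_cast; linear_combination h
        have := Nat.le_of_dvd (by omega) ((ZMod.natCast_eq_zero_iff _ _).mp h0)
        omega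
      have hy2 : x + 2 + 3 * (j : ZMod (3 * n + 2)) + 2 ∉ S := fun h =>
        hyx ((existsUnique_mem_add_two_mem hS hcard).unique ⟨hy, h⟩ ⟨hx, hx2⟩)
      have := add_three_mem hS hcard hy hy2
      push_cast
      rwa [mul_add, mul_one, ← add_assoc]
  refine (eq_of_subset_of_card_le (fun y hy => ?_) (by rw [hcard, card_everyThird])).symm
  obtain ⟨j, hj, rfl⟩ := mem_everyThird.mp hy
  exact hchain j hj

theorem domCount_three_n_add_two_general (n : ℕ) :
    domCount (3 * n + 2) (n + 1) = 3 * n + 2 := by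
  let toDomSet (a : ZMod (3 * n + 2)) :
      {S : Finset (ZMod (3 * n + 2)) // isDomSet (cycleG (3 * n + 2)) S ∧ #S = n + 1} :=
    ⟨everyThird n a, isDomSet_everyThird, card_everyThird⟩
  have hbij : Function.Bijective toDomSet := by
    constructor
    · exact fun a b hab => everyThird_injective (congrArg Subtype.val hab)
    · rintro ⟨S, hS, hcard⟩
      obtain ⟨x, ⟨hx, hx2⟩, -⟩ := existsUnique_mem_add_two_mem hS hcard
      exact ⟨x + 2, Subtype.ext (eq_everyThird hS hcard hx hx2).symm⟩
  rw [domCount, ← Nat.card_eq_of_bijective toDomSet hbij, Nat.card_zmod]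

theorem domCount_three_n_add_two (n : ℕ) (hn : 1 ≤ n) :
    domCount (3 * n + 2) (n + 1) = 3 * n + 2 :=
  domCount_three_n_add_two_general n
end

section
/- For every n ≥ 4, the number of dominating sets of the cycle C_n of cardinality n−3 equals (n−4)·n·(n+1)/6. -/
open Finset

lemma ZMod.natCast_ne_zero_of_pos_of_lt {n k : ℕ} (hk : 0 < k) (hkn : k < n) :
    (k : ZMod n) ≠ 0 := by
  rw [Ne, ZMod.natCast_eq_zero_iff]
  exact Nat.not_dvd_of_pos_of_lt hk hkn

def cycleClosedNbhd (n : ℕ) (v : ZMod n) : Finset (ZMod n) := {v - 1, v, v + 1}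

section

variable {n : ℕ}

lemma cycleG_adj_iff (hn : 1 < n) {u v : ZMod n} :
    (cycleG n).Adj u v ↔ u = v + 1 ∨ u = v - 1 := by
  have h1 : (1 : ZMod n) ≠ 0 := by exact_mod_cast ZMod.natCast_ne_zero_of_pos_of_lt one_pos hn
  constructor
  · rintro ⟨-, h | h⟩
    · left; linear_combination h
    · right; linear_combination -h
  · rintro (rfl | rfl)
    · exact ⟨fun h => h1 (by linear_combination h), Or.inl (by ring)⟩
    · exact ⟨fun h => h1 (by linear_combination -h), Or.inr (by ring)⟩

lemma isDomSet_cycleG_iff_s9 (hn : 1 < n) (S : Finset (ZMod n)) :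
    isDomSet (cycleG n) S ↔ ∀ v, ¬Disjoint (cycleClosedNbhd n v) S := by
  simp only [isDomSet, cycleClosedNbhd, disjoint_insert_left, disjoint_singleton_left,
    cycleG_adj_iff hn, not_and_or, not_not]
  refine forall_congr' fun v => ?_
  constructor
  · intro h
    by_cases hv : v ∈ S
    · exact Or.inr (Or.inl hv)
    · obtain ⟨u, hu, rfl | rfl⟩ := h hv <;> simp [hu]
  · rintro (h | h | h) hv
    · exact ⟨_, h, Or.inr (by ring)⟩
    · exact absurd h hv
    · exact ⟨_, h, Or.inl rfl⟩

lemma card_cycleClosedNbhd (hn : 2 < n) (v : ZMod n) : (cycleClosedNbhd n v).card = 3 := by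
  have h1 : (1 : ZMod n) ≠ 0 := by exact_mod_cast ZMod.natCast_ne_zero_of_pos_of_lt one_pos (by omega)
  have h2 : (2 : ZMod n) ≠ 0 := by exact_mod_cast ZMod.natCast_ne_zero_of_pos_of_lt two_pos hn
  rw [cycleClosedNbhd, card_insert_of_notMem, card_insert_of_notMem, card_singleton]
  · simp only [mem_singleton]
    exact fun h => h1 (by linear_combination -h)
  · simp only [mem_insert, mem_singleton, not_or]
    exact ⟨fun h => h1 (by linear_combination -h), fun h => h2 (by linear_combination -h)⟩

lemma cycleClosedNbhd_injective (hn : 3 < n) : Function.Injective (cycleClosedNbhd n) := by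
  have h1 : (1 : ZMod n) ≠ 0 := by exact_mod_cast ZMod.natCast_ne_zero_of_pos_of_lt one_pos (by omega)
  have h2 : (2 : ZMod n) ≠ 0 := by exact_mod_cast ZMod.natCast_ne_zero_of_pos_of_lt two_pos (by omega)
  have h3 : (3 : ZMod n) ≠ 0 := by exact_mod_cast ZMod.natCast_ne_zero_of_pos_of_lt three_pos hn
  intro v w h
  have mem (x : ZMod n) (hx : x ∈ cycleClosedNbhd n v) : x = w - 1 ∨ x = w ∨ x = w + 1 := by
    rw [h] at hx
    simpa [cycleClosedNbhd] using hx
  rcases mem v (by simp [cycleClosedNbhd]) with hv | hv | hv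
  · rcases mem (v - 1) (by simp [cycleClosedNbhd]) with h' | h' | h'
    · exact absurd (by linear_combination hv - h') h1
    · exact absurd (by linear_combination hv - h') h2
    · exact absurd (by linear_combination hv - h') h3
  · exact hv
  · rcases mem (v + 1) (by simp [cycleClosedNbhd]) with h' | h' | h'
    · exact absurd (by linear_combination h' - hv) h3
    · exact absurd (by linear_combination h' - hv) h2
    · exact absurd (by linear_combination h' - hv) h1

lemma isDomSet_cycleG_compl_iff [NeZero n] (hn : 2 < n) {T : Finset (ZMod n)} (hT : T.card = 3) :
    isDomSet (cycleG n) Tᶜ ↔ T ∉ univ.image (cycleClosedNbhd n) := by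
  simp only [isDomSet_cycleG_iff_s9 (n := n) (by omega), disjoint_compl_right_iff, mem_image,
    mem_univ, true_and, not_exists]
  refine forall_congr' fun v => not_congr ⟨fun h => ?_, fun h => h ▸ le_rfl⟩
  exact eq_of_subset_of_card_le h (by rw [hT, card_cycleClosedNbhd hn])

lemma domCount_sub_three_eq_choose_sub (hn : 3 < n) : domCount n (n - 3) = n.choose 3 - n := by
  have : NeZero n := ⟨by omega⟩
  set bad := univ.image (cycleClosedNbhd n)
  have hdom (S : Finset (ZMod n)) :
      isDomSet (cycleG n) S ∧ S.card = n - 3 ↔ Sᶜ ∈ powersetCard 3 univ \ bad := by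
    have hcard : S.card = n - 3 ↔ Sᶜ.card = 3 := by
      have hS : S.card ≤ n := (card_le_univ S).trans_eq (ZMod.card n)
      rw [card_compl, ZMod.card]
      omega
    rw [mem_sdiff, mem_powersetCard_univ, hcard, and_comm]
    exact and_congr_right fun h3 => by rw [← isDomSet_cycleG_compl_iff (by omega) h3, compl_compl]
  have hsub : bad ⊆ powersetCard 3 univ := by
    simp [bad, image_subset_iff, card_cycleClosedNbhd (n := n) (by omega)]
  rw [domCount, Nat.card_congr (Equiv.subtypeEquiv (compl_involutive.toPerm _) hdom),
    Nat.card_eq_fintype_card, Fintype.card_coe, card_sdiff_of_subset hsub, card_powersetCard,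
    card_image_of_injective _ (cycleClosedNbhd_injective hn), card_univ, ZMod.card]

end

lemma Nat.choose_three_sub_self {n : ℕ} (hn : 4 ≤ n) :
    n.choose 3 - n = (n - 4) * n * (n + 1) / 6 := by
  obtain ⟨m, rfl⟩ : ∃ m, n = m + 4 := ⟨n - 4, by omega⟩
  have h6 : 6 * (m + 4).choose 3 = m * (m + 4) * (m + 4 + 1) + 6 * (m + 4) := by
    rw [show 6 = (3).factorial by rfl, ← Nat.descFactorial_eq_factorial_mul_choose]
    simp only [Nat.descFactorial_succ, Nat.descFactorial_zero, show m + 4 - 2 = m + 2 by omega,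
      show m + 4 - 1 = m + 3 by omega, Nat.sub_zero]
    ring
  rw [Nat.add_sub_cancel]
  omega

theorem domCount_card_n_sub_three (n : ℕ) (hn : 4 ≤ n) :
    domCount n (n - 3) = (n - 4) * n * (n + 1) / 6 := by
  rw [domCount_sub_three_eq_choose_sub hn, Nat.choose_three_sub_self hn]
end

section
/- For every j ≥ 4, the sum over i from j to 3j of d(C_i, j) equals 3 times the sum over i from j−1 to 3j−3 of d(C_i, j−1). -/
/-!
Read a dominating `j`-set `S` of `C_n` around the cycle starting from a marked point `s ∈ S`:
consecutive elements are at distance `1`, `2` or `3`, since the middle vertex of a longer gap is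
undominated, and conversely any `j` gaps in `{1, 2, 3}` with total `n` give back such a pair
`(S, s)`. As rotations act transitively and preserve domination, `j · d(C_n, j)` equals `n` times
the number of `g ∈ {0, 1, 2}^j` with `j + ∑ g = n`. Summing over `n`,
`j · ∑ₙ d(C_n, j) = ∑_g (j + ∑ g) = 2j · 3^j`, because `g ↦ 2 - g` pairs the totals `j + ∑ g` and
`3j - ∑ g`. Hence `∑_{n=j}^{3j} d(C_n, j) = 2 · 3^j` for all `j ≥ 1`.
-/

open Finset

-- For `0 ∈ M ⊆ [0, n)`, this says that all gaps of `M` read cyclically modulo `n` are at most `b`.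
def MeetsWindows (b n : ℕ) (M : Finset ℕ) : Prop :=
  ∀ x, x + b ≤ n → ∃ y ∈ M, x ≤ y ∧ y < x + b

namespace GapSeq

variable {b j : ℕ}

-- The value `1` past `j` is arbitrary; it makes `pos g` strictly monotone on all of `ℕ`.
def step (g : Fin j → Fin b) (k : ℕ) : ℕ :=
  if h : k < j then g ⟨k, h⟩ + 1 else 1

def pos (g : Fin j → Fin b) (k : ℕ) : ℕ :=
  ∑ r ∈ range k, step g r

variable (g : Fin j → Fin b)

lemma step_of_lt {k : ℕ} (hk : k < j) : step g k = g ⟨k, hk⟩ + 1 := dif_pos hk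

lemma one_le_step (k : ℕ) : 1 ≤ step g k := by
  unfold step; split <;> omega

lemma step_le_of_lt {k : ℕ} (hk : k < j) : step g k ≤ b := by
  rw [step_of_lt g hk]; exact (g _).is_lt

@[simp] lemma pos_zero : pos g 0 = 0 := rfl

lemma pos_succ (k : ℕ) : pos g (k + 1) = pos g k + step g k := sum_range_succ _ _

lemma pos_strictMono : StrictMono (pos g) :=
  strictMono_nat_of_lt_succ fun k => by rw [pos_succ]; linarith [one_le_step g k]

lemma pos_top : pos g j = ∑ t, ((g t : ℕ) + 1) := by
  rw [pos, ← Fin.sum_univ_eq_sum_range]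
  exact sum_congr rfl fun t _ => step_of_lt g t.is_lt

lemma pos_top_mem_Icc : pos g j ∈ Icc j (b * j) := by
  rw [pos_top, mem_Icc]
  constructor
  · simpa using sum_le_sum fun t (_ : t ∈ univ) => Nat.le_add_left 1 (g t : ℕ)
  · simpa [mul_comm] using sum_le_sum fun t (_ : t ∈ univ) => Nat.succ_le_of_lt (g t).is_lt

lemma pos_add_pos_rev : pos g j + pos (Fin.rev ∘ g) j = (b + 1) * j := by
  rw [pos_top, pos_top, ← sum_add_distrib, mul_comm]
  calc ∑ t, ((g t : ℕ) + 1 + (((Fin.rev ∘ g) t : ℕ) + 1)) = ∑ _t : Fin j, (b + 1) :=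
        sum_congr rfl fun t _ => by
          simp only [Function.comp_apply, Fin.val_rev]; have := (g t).is_lt; omega
    _ = j * (b + 1) := by simp

lemma pos_snoc (a : Fin b) {k : ℕ} (hk : k ≤ j) :
    pos (Fin.snoc g a : Fin (j + 1) → Fin b) k = pos g k := by
  refine sum_congr rfl fun r hr => ?_
  have hr : r < j := by rw [mem_range] at hr; omega
  rw [step_of_lt _ (by omega), step_of_lt g hr]
  simpa using congrArg (fun x : Fin b => (x : ℕ) + 1)
    (Fin.snoc_castSucc (α := fun _ => Fin b) a g ⟨r, hr⟩)

lemma pos_snoc_top (a : Fin b) :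
    pos (Fin.snoc g a : Fin (j + 1) → Fin b) (j + 1) = pos g j + a + 1 := by
  rw [pos_succ, pos_snoc g a le_rfl, step_of_lt _ (Nat.lt_succ_self j), add_assoc]
  exact congrArg (fun x : Fin b => pos g j + ((x : ℕ) + 1))
    (Fin.snoc_last (α := fun _ => Fin b) a g)

lemma coe_image_pos :
    ((range j).image (pos g) : Set ℕ) = Set.range fun k : Fin j => pos g k := by
  ext m; simp [Fin.exists_iff]

lemma card_image_pos : #((range j).image (pos g)) = j := by
  rw [card_image_of_injective _ (pos_strictMono g).injective, card_range]

lemma image_pos_subset : (range j).image (pos g) ⊆ range (pos g j) := by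
  intro m hm
  obtain ⟨k, hk, rfl⟩ := mem_image.1 hm
  exact mem_range.2 (pos_strictMono g (mem_range.1 hk))

lemma zero_mem_image_pos (hj : 0 < j) : 0 ∈ (range j).image (pos g) :=
  mem_image.2 ⟨0, mem_range.2 hj, rfl⟩

lemma meetsWindows_image_pos (hj : 0 < j) :
    MeetsWindows b (pos g j) ((range j).image (pos g)) := by
  intro x hx
  have hb : 0 < b := Fin.pos (g ⟨0, hj⟩)
  set k := Nat.findGreatest (fun k => pos g k < x + b) j
  have hk : pos g k < x + b := Nat.findGreatest_spec (P := fun k => pos g k < x + b)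
    (Nat.zero_le j) (by simp [hb])
  have hkj : k < j := lt_of_le_of_ne (Nat.findGreatest_le j) fun h => by
    rw [h] at hk; omega
  have hk1 : x + b ≤ pos g (k + 1) :=
    not_lt.1 (Nat.findGreatest_is_greatest (P := fun k => pos g k < x + b)
      (Nat.lt_succ_self k) hkj)
  rw [pos_succ] at hk1
  exact ⟨pos g k, mem_image_of_mem _ (mem_range.2 hkj), by
    have := step_le_of_lt g hkj; omega, hk⟩

lemma eq_of_image_pos_eq {g g' : Fin j → Fin b} (htop : pos g j = pos g' j)
    (h : (range j).image (pos g) = (range j).image (pos g')) : g = g' := by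
  have hmono : ∀ g : Fin j → Fin b, StrictMono fun k : Fin j => pos g k :=
    fun g => (pos_strictMono g).comp Fin.val_strictMono
  have hFin := ((hmono g).range_inj (hmono g')).1 (by rw [← coe_image_pos, ← coe_image_pos, h])
  have hpos : ∀ k ≤ j, pos g k = pos g' k := fun k hk =>
    hk.lt_or_eq.elim (fun hk => congrFun hFin ⟨k, hk⟩) fun hk => hk ▸ htop
  funext t
  have := hpos (t + 1) t.is_lt
  rw [pos_succ, pos_succ, hpos t t.is_lt.le, step_of_lt g t.is_lt, step_of_lt g' t.is_lt] at this
  exact Fin.ext (by simpa using this)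

lemma exists_image_pos_eq {n : ℕ} {M : Finset ℕ} (h0 : 0 ∈ M) (hM : M ⊆ range n)
    (hcard : #M = j + 1) (hW : MeetsWindows b n M) :
    ∃ g : Fin (j + 1) → Fin b, pos g (j + 1) = n ∧ (range (j + 1)).image (pos g) = M := by
  induction j generalizing n M with
  | zero =>
    obtain ⟨a, rfl⟩ := card_eq_one.1 hcard
    obtain rfl : 0 = a := mem_singleton.1 h0
    have hn : 0 < n := mem_range.1 (hM h0)
    have hnb : n ≤ b := by
      by_contra! h
      obtain ⟨y, hy, hxy, -⟩ := hW (n - b) (by omega)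
      rw [mem_singleton.1 hy] at hxy
      omega
    refine ⟨fun _ => ⟨n - 1, by omega⟩, ?_, by simp⟩
    rw [pos_succ, step_of_lt _ zero_lt_one]
    simp only [pos_zero]
    omega
  | succ j ih =>
    have hne : M.Nonempty := ⟨0, h0⟩
    set m := M.max' hne
    have hm : m ∈ M := max'_mem M hne
    have hmn : m < n := mem_range.1 (hM hm)
    have hm0 : 0 < m := by
      obtain ⟨y, hy, hy0⟩ := exists_mem_ne (by omega : 1 < #M) 0
      exact lt_of_lt_of_le (Nat.pos_of_ne_zero hy0) (le_max' M y hy)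
    have hnm : n ≤ m + b := by
      by_contra! h
      obtain ⟨y, hy, hxy, -⟩ := hW (n - b) (by omega)
      have := le_max' M y hy
      omega
    have herase : M.erase m ⊆ range m := fun y hy =>
      mem_range.2 (lt_of_le_of_ne (le_max' M y (mem_of_mem_erase hy)) (ne_of_mem_erase hy))
    have hW' : MeetsWindows b m (M.erase m) := fun x hx => by
      obtain ⟨y, hy, hxy, hyx⟩ := hW x (by omega)
      exact ⟨y, mem_erase.2 ⟨by omega, hy⟩, hxy, hyx⟩
    obtain ⟨g, hg, himg⟩ := ih (mem_erase.2 ⟨hm0.ne, h0⟩) herase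
      (by rw [card_erase_of_mem hm, hcard]; rfl) hW'
    have hlast : n - m - 1 < b := by omega
    refine ⟨Fin.snoc g ⟨n - m - 1, hlast⟩, ?_, ?_⟩
    · rw [pos_snoc_top, hg]
      simp only
      omega
    · rw [range_add_one, image_insert, pos_snoc g _ le_rfl, hg,
        image_congr fun k hk => pos_snoc g _ (mem_range.1 hk).le, himg, insert_erase hm]

open Classical in
lemma card_pos_top_eq (hj : 0 < j) (n : ℕ) :
    #{g : Fin j → Fin b | pos g j = n} =
      #{M ∈ (range n).powerset | 0 ∈ M ∧ #M = j ∧ MeetsWindows b n M} := by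
  apply card_bij fun g _ => (range j).image (pos g)
  · rintro g hg
    obtain rfl := (mem_filter.1 hg).2
    exact mem_filter.2 ⟨mem_powerset.2 (image_pos_subset g),
      zero_mem_image_pos g hj, card_image_pos g, meetsWindows_image_pos g hj⟩
  · intro g hg g' hg' h
    exact eq_of_image_pos_eq ((mem_filter.1 hg).2.trans (mem_filter.1 hg').2.symm) h
  · intro M hM
    obtain ⟨hsub, h0, hcard, hW⟩ := mem_filter.1 hM
    obtain ⟨k, rfl⟩ : ∃ k, j = k + 1 := ⟨j - 1, by omega⟩
    obtain ⟨g, hg, himg⟩ := exists_image_pos_eq h0 (mem_powerset.1 hsub) hcard hW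
    exact ⟨g, mem_filter.2 ⟨mem_univ g, hg⟩, himg⟩

lemma two_mul_sum_pos_top :
    2 * ∑ g : Fin j → Fin b, pos g j = (b + 1) * j * b ^ j := by
  have hrev : ∑ g : Fin j → Fin b, pos (Fin.rev ∘ g) j = ∑ g, pos g j :=
    (Equiv.arrowCongr (Equiv.refl (Fin j)) Fin.revPerm).sum_comp fun g => pos g j
  calc 2 * ∑ g : Fin j → Fin b, pos g j
      = ∑ g : Fin j → Fin b, (pos g j + pos (Fin.rev ∘ g) j) := by
        rw [sum_add_distrib, hrev, two_mul]
    _ = (b + 1) * j * b ^ j := by simp [pos_add_pos_rev, mul_comm]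

end GapSeq

lemma natCast_injOn_range (n : ℕ) : Set.InjOn (Nat.cast : ℕ → ZMod n) (range n) :=
  fun x hx y hy h => by
    simpa [ZMod.val_natCast_of_lt (mem_range.1 hx), ZMod.val_natCast_of_lt (mem_range.1 hy)]
      using congrArg ZMod.val h

lemma natCast_mem_image_natCast_iff {n x : ℕ} {M : Finset ℕ} (hM : M ⊆ range n) (hx : x < n) :
    (x : ZMod n) ∈ M.image Nat.cast ↔ x ∈ M := by
  rw [← mem_coe, coe_image]
  exact (natCast_injOn_range n).mem_image_iff (coe_subset.2 hM) (mem_coe.2 (mem_range.2 hx))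

lemma isDomSet_image_natCast_iff {n : ℕ} {M : Finset ℕ} (hM : M ⊆ range n) (h0 : 0 ∈ M) :
    isDomSet (cycleG n) (M.image Nat.cast) ↔ MeetsWindows 3 n M := by
  have hn : 0 < n := mem_range.1 (hM h0)
  have hcast : ∀ x < n, ∀ y < n, (x : ZMod n) = y → x = y := fun x hx y hy =>
    @natCast_injOn_range n x (by simpa using hx) y (by simpa using hy)
  constructor
  · intro hdom x hx
    by_cases hx1 : x + 1 ∈ M
    · exact ⟨x + 1, hx1, by omega, by omega⟩
    obtain ⟨u, hu, -, hadj⟩ :=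
      hdom ((x + 1 : ℕ) : ZMod n) (by rwa [natCast_mem_image_natCast_iff hM (by omega)])
    obtain ⟨y, hy, rfl⟩ := mem_image.1 hu
    have hyn := mem_range.1 (hM hy)
    rcases hadj with h | h
    · obtain rfl : y = x + 2 := hcast y hyn (x + 2) (by omega) (by
        rw [sub_eq_iff_eq_add] at h; rw [h]; push_cast; ring)
      exact ⟨x + 2, hy, by omega, by omega⟩
    · obtain rfl : x = y := hcast x (by omega) y hyn (by
        rw [sub_eq_iff_eq_add] at h; push_cast at h; linear_combination h)
      exact ⟨x, hy, le_rfl, by omega⟩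
  · intro hW v hv
    have : NeZero n := ⟨hn.ne'⟩
    set x := v.val
    have hvx : v = (x : ZMod n) := (ZMod.natCast_zmod_val v).symm
    have hxn : x < n := ZMod.val_lt v
    have hxM : x ∉ M := by rwa [hvx, natCast_mem_image_natCast_iff hM hxn] at hv
    have hne : ∀ u ∈ M.image Nat.cast, u ≠ v := fun u hu h => hv (h ▸ hu)
    by_cases hlast : x + 1 = n
    · refine ⟨((0 : ℕ) : ZMod n), mem_image_of_mem _ h0, hne _ (mem_image_of_mem _ h0), Or.inl ?_⟩
      have : ((x + 1 : ℕ) : ZMod n) = 0 := by rw [hlast, ZMod.natCast_self]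
      push_cast at this
      rw [hvx]
      linear_combination -this
    · have hx0 : x ≠ 0 := fun h => hxM (h ▸ h0)
      obtain ⟨y, hy, hxy, hyx⟩ := hW (x - 1) (by omega)
      have hyx' : y ≠ x := fun h => hxM (h ▸ hy)
      refine ⟨(y : ZMod n), mem_image_of_mem _ hy, hne _ (mem_image_of_mem _ hy), ?_⟩
      rcases (by omega : y = x + 1 ∨ y + 1 = x) with rfl | hyx1
      · left; rw [hvx]; push_cast; ring
      · right; rw [hvx, ← hyx1]; push_cast; ring

lemma image_val_image_natCast {n : ℕ} {M : Finset ℕ} (hM : M ⊆ range n) :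
    (M.image (Nat.cast : ℕ → ZMod n)).image ZMod.val = M := by
  rw [image_image]
  exact (image_congr fun x hx => ZMod.val_natCast_of_lt (mem_range.1 (hM hx))).trans image_id'

lemma image_natCast_image_val {n : ℕ} [NeZero n] (S : Finset (ZMod n)) :
    (S.image ZMod.val).image Nat.cast = S := by
  simp [image_image]

def cycleG.rotate {n : ℕ} (a : ZMod n) : cycleG n ≃g cycleG n :=
  { Equiv.addRight a with map_rel_iff' := by simp [cycleG] }

lemma isDomSet.map {V W : Type*} {G : SimpleGraph V} {H : SimpleGraph W} (φ : G ≃g H)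
    {S : Finset V} (hS : isDomSet G S) : isDomSet H (S.map φ.toEquiv.toEmbedding) := by
  intro w hw
  obtain ⟨u, hu, hadj⟩ := hS (φ.symm w) fun h => hw (mem_map.2 ⟨_, h, by simp⟩)
  exact ⟨φ u, mem_map_of_mem _ hu, by simpa using φ.map_adj_iff.2 hadj⟩

section DomSets

open Classical

noncomputable def domSets (n j : ℕ) [NeZero n] : Finset (Finset (ZMod n)) :=
  {S | isDomSet (cycleG n) S ∧ #S = j}

variable {n : ℕ} [NeZero n]

lemma domCount_eq_card_domSets (j : ℕ) : domCount n j = #(domSets n j) := by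
  rw [domCount, Nat.card_eq_fintype_card, Fintype.card_subtype, domSets]

lemma map_rotate_mem_domSets {j : ℕ} {S : Finset (ZMod n)} (a : ZMod n) (hS : S ∈ domSets n j) :
    S.map (cycleG.rotate a).toEquiv.toEmbedding ∈ domSets n j := by
  simp only [domSets, mem_filter, mem_univ, true_and] at hS ⊢
  exact ⟨hS.1.map _, by rw [card_map, hS.2]⟩

lemma card_domSets_filter_mem (j : ℕ) (a : ZMod n) :
    #{S ∈ domSets n j | a ∈ S} = #{S ∈ domSets n j | 0 ∈ S} := by
  apply card_nbij' (fun S => S.map (cycleG.rotate (-a)).toEquiv.toEmbedding)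
    (fun S => S.map (cycleG.rotate a).toEquiv.toEmbedding)
  · intro S hS
    rw [coe_filter] at hS
    exact mem_filter.2 ⟨map_rotate_mem_domSets _ hS.1, mem_map.2 ⟨a, hS.2, by simp [cycleG.rotate]⟩⟩
  · intro S hS
    rw [coe_filter] at hS
    exact mem_filter.2 ⟨map_rotate_mem_domSets _ hS.1, mem_map.2 ⟨0, hS.2, by simp [cycleG.rotate]⟩⟩
  · intro S _
    ext v; simp [cycleG.rotate]
  · intro S _
    ext v; simp [cycleG.rotate]

lemma mul_domCount (j : ℕ) : j * domCount n j = n * #{S ∈ domSets n j | 0 ∈ S} := by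
  calc j * domCount n j = ∑ S ∈ domSets n j, #S := by
        rw [sum_const_nat fun S hS => (mem_filter.1 hS).2.2, domCount_eq_card_domSets, mul_comm]
    _ = n * #{S ∈ domSets n j | 0 ∈ S} := by
        rw [sum_card fun a => card_domSets_filter_mem j a, ZMod.card]

lemma card_domSets_filter_zero_mem (j : ℕ) :
    #{S ∈ domSets n j | 0 ∈ S} =
      #{M ∈ (range n).powerset | 0 ∈ M ∧ #M = j ∧ MeetsWindows 3 n M} := by
  apply card_nbij' (fun S => S.image ZMod.val) (fun M => M.image Nat.cast)
  · intro S hS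
    simp only [domSets, coe_filter, mem_filter, mem_univ, true_and] at hS ⊢
    obtain ⟨⟨hdom, hcard⟩, h0⟩ := hS
    have hsub : S.image ZMod.val ⊆ range n := fun x hx => by
      obtain ⟨v, -, rfl⟩ := mem_image.1 hx; exact mem_range.2 (ZMod.val_lt v)
    have h0' : 0 ∈ S.image ZMod.val := mem_image.2 ⟨0, h0, ZMod.val_zero⟩
    refine ⟨mem_powerset.2 hsub, h0',
      by rw [card_image_of_injective _ (ZMod.val_injective n), hcard], ?_⟩
    rw [← isDomSet_image_natCast_iff hsub h0', image_natCast_image_val]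
    exact hdom
  · intro M hM
    simp only [domSets, coe_filter, mem_filter, mem_univ, true_and, mem_powerset] at hM ⊢
    obtain ⟨hsub, h0, hcard, hW⟩ := hM
    refine ⟨⟨(isDomSet_image_natCast_iff hsub h0).2 hW, ?_⟩, mem_image.2 ⟨0, h0, Nat.cast_zero⟩⟩
    rw [card_image_of_injOn ((natCast_injOn_range n).mono (coe_subset.2 hsub)), hcard]
  · intro S _
    exact image_natCast_image_val S
  · intro M hM
    exact image_val_image_natCast (mem_powerset.1 (mem_filter.1 hM).1)

end DomSets

lemma mul_domCount_eq_card_gapSeq {n j : ℕ} (hn : 0 < n) (hj : 0 < j) :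
    j * domCount n j = n * #{g : Fin j → Fin 3 | GapSeq.pos g j = n} := by
  have : NeZero n := ⟨hn.ne'⟩
  rw [mul_domCount, card_domSets_filter_zero_mem, GapSeq.card_pos_top_eq hj]

lemma sum_domCount_Icc {j : ℕ} (hj : 0 < j) :
    ∑ n ∈ Icc j (3 * j), domCount n j = 2 * 3 ^ j := by
  have hfibers :
      j * ∑ n ∈ Icc j (3 * j), domCount n j = ∑ g : Fin j → Fin 3, GapSeq.pos g j := by
    rw [mul_sum, ← sum_fiberwise_of_maps_to fun g _ => GapSeq.pos_top_mem_Icc g]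
    refine sum_congr rfl fun n hn => ?_
    rw [mul_domCount_eq_card_gapSeq (by linarith [(mem_Icc.1 hn).1]) hj,
      sum_congr rfl fun g hg => (mem_filter.1 hg).2, sum_const, smul_eq_mul, mul_comm]
  have htotal := GapSeq.two_mul_sum_pos_top (b := 3) (j := j)
  refine Nat.eq_of_mul_eq_mul_left (by omega : 0 < 2 * j) ?_
  calc 2 * j * ∑ n ∈ Icc j (3 * j), domCount n j
        = 2 * ∑ g : Fin j → Fin 3, GapSeq.pos g j := by rw [mul_assoc, hfibers]
    _ = 2 * j * (2 * 3 ^ j) := by rw [htotal]; ring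

theorem domCount_sum_identity (j : ℕ) (hj : 4 ≤ j) :
    ∑ i ∈ Finset.Icc j (3 * j), domCount i j =
      3 * ∑ i ∈ Finset.Icc (j - 1) (3 * j - 3), domCount i (j - 1) := by
  obtain ⟨k, rfl⟩ : ∃ k, j = k + 1 := ⟨j - 1, by omega⟩
  have hIcc : 3 * (k + 1) - 3 = 3 * k := by omega
  rw [Nat.add_sub_cancel, hIcc, sum_domCount_Icc (by omega), sum_domCount_Icc (by omega), pow_succ]
  ring
end

section
/- For n ≥ 3, the unique dominating sets of C_{3n} of minimum cardinality n are the three sets {1,4,...,3n−2}, {2,5,...,3n−1}, {3,6,...,3n} (residue classes modulo 3). -/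
open Finset

namespace Finset

variable {ι α : Type*} [Fintype α] [DecidableEq α]

theorem card_mul_eq_card_iff_pairwiseDisjoint {s : Finset ι} {B : ι → Finset α} {k : ℕ}
    (hk : ∀ i ∈ s, #(B i) = k) (hcover : ∀ x, ∃ i ∈ s, x ∈ B i) :
    #s * k = Fintype.card α ↔ (s : Set ι).PairwiseDisjoint B := by
  have hunion : s.biUnion B = univ := eq_univ_of_forall fun x => mem_biUnion.2 (hcover x)
  constructor
  · intro h
    have hsum : ∑ _x : α, 1 = ∑ x, #{i ∈ s | x ∈ B i} := by
      have := sum_card_bipartiteAbove_eq_sum_card_bipartiteBelow (s := s) (t := univ)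
        (fun i x => x ∈ B i)
      simp only [bipartiteAbove, bipartiteBelow, filter_mem_eq_inter, univ_inter] at this
      rw [← this, sum_const_nat hk, h]
      simp
    have hpos : ∀ x ∈ univ, 1 ≤ #{i ∈ s | x ∈ B i} := fun x _ => by
      obtain ⟨i, hi, hxi⟩ := hcover x
      exact card_pos.2 ⟨i, mem_filter.2 ⟨hi, hxi⟩⟩
    have hone := (sum_eq_sum_iff_of_le hpos).1 hsum
    rw [pairwiseDisjoint_iff]
    rintro i hi j hj ⟨x, hx⟩
    rw [mem_inter] at hx
    exact card_le_one.1 (hone x (mem_univ x)).ge i (mem_filter.2 ⟨hi, hx.1⟩) j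
      (mem_filter.2 ⟨hj, hx.2⟩)
  · intro h
    rw [← card_univ, ← hunion, card_biUnion h, sum_const_nat hk]

end Finset

variable {N : ℕ}

namespace ZMod

theorem natCast_ne_zero_of_pos_of_lt_s14 {k : ℕ} (hk : 0 < k) (hkN : k < N) : (k : ZMod N) ≠ 0 :=
  fun h => absurd (Nat.le_of_dvd hk ((natCast_eq_zero_iff k N).1 h)) (by omega)

theorem exists_eq_three_mul_add [NeZero N] (x : ZMod N) :
    ∃ (q : ZMod N) (r : ℕ), r < 3 ∧ x = 3 * q + r := by
  refine ⟨(x.val / 3 : ℕ), x.val % 3, Nat.mod_lt _ (by norm_num), ?_⟩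
  conv_lhs => rw [← natCast_zmod_val x, ← Nat.div_add_mod x.val 3]
  push_cast
  ring

end ZMod

namespace cycleG

def closedNbhd (u : ZMod N) : Finset (ZMod N) := {u - 1, u, u + 1}

theorem mem_closedNbhd {u v : ZMod N} :
    v ∈ closedNbhd u ↔ v = u - 1 ∨ v = u ∨ v = u + 1 := by
  simp [closedNbhd]

theorem mem_closedNbhd_comm {u v : ZMod N} : v ∈ closedNbhd u ↔ u ∈ closedNbhd v := by
  simp only [mem_closedNbhd]
  constructor <;> rintro (rfl | rfl | rfl) <;> simp

theorem card_closedNbhd (hN : 2 < N) (u : ZMod N) : #(closedNbhd u) = 3 := by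
  have h1 : (1 : ZMod N) ≠ 0 := by
    exact_mod_cast ZMod.natCast_ne_zero_of_pos_of_lt_s14 one_pos (by omega)
  have h2 : (2 : ZMod N) ≠ 0 := by
    exact_mod_cast ZMod.natCast_ne_zero_of_pos_of_lt_s14 two_pos hN
  refine card_eq_three.2
    ⟨u - 1, u, u + 1, fun h => h1 ?_, fun h => h2 ?_, fun h => h1 ?_, rfl⟩ <;>
    linear_combination -h

theorem isDomSet_iff {S : Finset (ZMod N)} :
    isDomSet (cycleG N) S ↔ ∀ v, ∃ u ∈ S, v ∈ closedNbhd u := by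
  simp only [mem_closedNbhd]
  constructor
  · intro hS v
    by_cases hv : v ∈ S
    · exact ⟨v, hv, .inr (.inl rfl)⟩
    obtain ⟨u, hu, -, hadj | hadj⟩ := hS v hv
    · exact ⟨u, hu, .inl (by linear_combination -hadj)⟩
    · exact ⟨u, hu, .inr (.inr (by linear_combination hadj))⟩
  · intro hS v hv
    obtain ⟨u, hu, rfl | rfl | rfl⟩ := hS v
    · exact ⟨u, hu, fun h => hv (h ▸ hu), .inl (by ring)⟩
    · exact absurd hu hv
    · exact ⟨u, hu, fun h => hv (h ▸ hu), .inr (by ring)⟩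

section PairwiseDisjoint

variable {S : Finset (ZMod N)}

theorem add_one_notMem_of_pairwiseDisjoint (hN : 2 < N)
    (hS : (S : Set (ZMod N)).PairwiseDisjoint closedNbhd) {u : ZMod N} (hu : u ∈ S) :
    u + 1 ∉ S := by
  intro hu1
  have h := hS.elim_finset hu hu1 u (mem_closedNbhd.2 (.inr (.inl rfl)))
    (mem_closedNbhd.2 (.inl (by ring)))
  exact ZMod.natCast_ne_zero_of_pos_of_lt_s14 (N := N) one_pos (by omega)
    (by push_cast; linear_combination -h)

theorem add_two_notMem_of_pairwiseDisjoint (hN : 2 < N)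
    (hS : (S : Set (ZMod N)).PairwiseDisjoint closedNbhd) {u : ZMod N} (hu : u ∈ S) :
    u + 2 ∉ S := by
  intro hu2
  have h := hS.elim_finset hu hu2 (u + 1) (mem_closedNbhd.2 (.inr (.inr rfl)))
    (mem_closedNbhd.2 (.inl (by ring)))
  exact ZMod.natCast_ne_zero_of_pos_of_lt_s14 (N := N) two_pos hN
    (by push_cast; linear_combination -h)

theorem add_three_mem_of_pairwiseDisjoint (hN : 2 < N)
    (hdom : ∀ v, ∃ u ∈ S, v ∈ closedNbhd u)
    (hS : (S : Set (ZMod N)).PairwiseDisjoint closedNbhd) {u : ZMod N} (hu : u ∈ S) :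
    u + 3 ∈ S := by
  obtain ⟨w, hw, hnbhd⟩ := hdom (u + 2)
  rcases mem_closedNbhd.1 hnbhd with h | rfl | h
  · convert hw using 1
    linear_combination h
  · exact absurd hw (add_two_notMem_of_pairwiseDisjoint hN hS hu)
  · refine absurd ?_ (add_one_notMem_of_pairwiseDisjoint hN hS hu)
    convert hw using 1
    linear_combination h

theorem coe_eq_setOf_three_mul_add_of_pairwiseDisjoint [NeZero N] (hN : 2 < N)
    (hdom : ∀ v, ∃ u ∈ S, v ∈ closedNbhd u)
    (hS : (S : Set (ZMod N)).PairwiseDisjoint closedNbhd) {a : ZMod N} (ha : a ∈ S) :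
    (S : Set (ZMod N)) = {x | ∃ m, x = 3 * m + a} := by
  have hclass : ∀ m : ZMod N, 3 * m + a ∈ S := by
    intro m
    rw [← ZMod.natCast_zmod_val m]
    induction m.val with
    | zero => simpa using ha
    | succ k ih =>
      convert add_three_mem_of_pairwiseDisjoint hN hdom hS ih using 1
      push_cast
      ring
  ext x
  refine ⟨fun hx => ?_, fun ⟨m, hm⟩ => hm ▸ hclass m⟩
  obtain ⟨q, r, hr, hxa⟩ := ZMod.exists_eq_three_mul_add (x - a)
  have hxr : x - r ∈ S := by
    convert hclass q using 1
    linear_combination hxa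
  interval_cases r <;> simp only [Nat.cast_zero, Nat.cast_one, Nat.cast_ofNat] at hxa hxr
  · exact ⟨q, by linear_combination hxa⟩
  · exact absurd (by simpa using hx) (add_one_notMem_of_pairwiseDisjoint hN hS hxr)
  · exact absurd (by simpa using hx) (add_two_notMem_of_pairwiseDisjoint hN hS hxr)

end PairwiseDisjoint

theorem injOn_castHom_closedNbhd (h3 : 3 ∣ N) (v : ZMod N) :
    Set.InjOn (ZMod.castHom h3 (ZMod 3)) (closedNbhd v) := by
  intro x hx y hy hxy
  rw [mem_coe, mem_closedNbhd] at hx hy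
  rcases hx with rfl | rfl | rfl <;> rcases hy with rfl | rfl | rfl <;>
    first
    | rfl
    | (exfalso; simp only [map_sub, map_add, map_one] at hxy; grind)

theorem castHom_three_mul_add (h3 : 3 ∣ N) (m c : ZMod N) :
    ZMod.castHom h3 (ZMod 3) (3 * m + c) = ZMod.castHom h3 (ZMod 3) c := by
  rw [map_add, map_mul, map_ofNat, show (3 : ZMod 3) = 0 from rfl, zero_mul, zero_add]

theorem pairwiseDisjoint_closedNbhd_setOf_three_mul_add (h3 : 3 ∣ N) (c : ZMod N) :
    ({x | ∃ m, x = 3 * m + c} : Set (ZMod N)).PairwiseDisjoint closedNbhd := by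
  rw [pairwiseDisjoint_iff]
  rintro _ ⟨m, rfl⟩ _ ⟨m', rfl⟩ ⟨v, hv⟩
  rw [mem_inter] at hv
  exact injOn_castHom_closedNbhd h3 v (mem_closedNbhd_comm.1 hv.1) (mem_closedNbhd_comm.1 hv.2)
    (by rw [castHom_three_mul_add, castHom_three_mul_add])

theorem exists_mem_closedNbhd_three_mul_add [NeZero N] (c v : ZMod N) :
    ∃ m, v ∈ closedNbhd (3 * m + c) := by
  obtain ⟨q, r, hr, hvc⟩ := ZMod.exists_eq_three_mul_add (v - c)
  interval_cases r <;> simp only [Nat.cast_zero, Nat.cast_one, Nat.cast_ofNat] at hvc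
  · exact ⟨q, mem_closedNbhd.2 (.inr (.inl (by linear_combination hvc)))⟩
  · exact ⟨q, mem_closedNbhd.2 (.inr (.inr (by linear_combination hvc)))⟩
  · exact ⟨q + 1, mem_closedNbhd.2 (.inl (by linear_combination hvc))⟩

end cycleG

open cycleG

theorem min_dominating_sets_of_C3n (n : ℕ) (hn : 3 ≤ n) (S : Finset (ZMod (3 * n))) :
    (isDomSet (cycleG (3 * n)) S ∧ S.card = n) ↔
      ((S : Set (ZMod (3 * n))) = {x | ∃ m : ZMod (3 * n), x = 3 * m + 1} ∨
       (S : Set (ZMod (3 * n))) = {x | ∃ m : ZMod (3 * n), x = 3 * m + 2} ∨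
       (S : Set (ZMod (3 * n))) = {x | ∃ m : ZMod (3 * n), x = 3 * m}) := by
  have : NeZero (3 * n) := ⟨by omega⟩
  have hN : 2 < 3 * n := by omega
  have hcard (u) (_ : u ∈ S) : #(closedNbhd u) = 3 := card_closedNbhd hN u
  rw [isDomSet_iff]
  constructor
  · rintro ⟨hdom, hS⟩
    have hdisj := (card_mul_eq_card_iff_pairwiseDisjoint hcard hdom).1
      (by rw [hS, ZMod.card, mul_comm])
    -- a dominator of `1` lies in `{0, 1, 2}`, which pins down the residue class
    obtain ⟨a, ha, h1⟩ := hdom 1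
    rw [coe_eq_setOf_three_mul_add_of_pairwiseDisjoint hN hdom hdisj ha]
    rcases mem_closedNbhd.1 h1 with h | rfl | h
    · right; left; rw [show a = 2 by linear_combination -h]
    · left; rfl
    · right; right; simp [show a = 0 by linear_combination -h]
  · intro h
    obtain ⟨c, hc⟩ : ∃ c, (S : Set (ZMod (3 * n))) = {x | ∃ m, x = 3 * m + c} := by
      rcases h with h | h | h
      exacts [⟨1, h⟩, ⟨2, h⟩, ⟨0, by simpa using h⟩]
    have hdom : ∀ v, ∃ u ∈ S, v ∈ closedNbhd u := fun v => by
      obtain ⟨m, hm⟩ := exists_mem_closedNbhd_three_mul_add c v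
      exact ⟨3 * m + c, by rw [← mem_coe, hc]; exact ⟨m, rfl⟩, hm⟩
    have hdisj : (S : Set (ZMod (3 * n))).PairwiseDisjoint closedNbhd :=
      hc ▸ pairwiseDisjoint_closedNbhd_setOf_three_mul_add (dvd_mul_right 3 n) c
    have := (card_mul_eq_card_iff_pairwiseDisjoint hcard hdom).2 hdisj
    rw [ZMod.card] at this
    exact ⟨hdom, by omega⟩
end

section
/- For n ≥ 4: C_{n−1} has no dominating set of cardinality i−1 while both C_{n−2} and C_{n−3} do, if and only if n = 3k+2 and i = k+1 for some positive integer k. -/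
/-!
Each vertex of `C_m` dominates itself and its two neighbours, so a dominating set has at least
`⌈m/3⌉` elements. Conversely every third vertex of the path `0, 1, …, m - 1` already dominates
it, and a superset of a dominating set dominates; hence `C_m` has a dominating set of size `j`
exactly when `⌈m/3⌉ ≤ j ≤ m`. For the three cycles `C_{n-1}, C_{n-2}, C_{n-3}` the resulting
inequalities on `i - 1` can only hold when `⌈(n-1)/3⌉ > ⌈(n-2)/3⌉`, i.e. `n ≡ 2 (mod 3)`.
-/

open Finset

instance (m : ℕ) : DecidableRel (cycleG m).Adj :=
  fun u v => inferInstanceAs (Decidable (u ≠ v ∧ (u - v = 1 ∨ v - u = 1)))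

theorem isDomSet.mono {V : Type*} {G : SimpleGraph V} {S T : Finset V} (hST : S ⊆ T)
    (hS : isDomSet G S) : isDomSet G T := fun v hv =>
  let ⟨u, hu, huv⟩ := hS v fun h => hv (hST h)
  ⟨u, hST hu, huv⟩

theorem isDomSet.card_le_mul {V : Type*} [Fintype V] [DecidableEq V] {G : SimpleGraph V}
    [DecidableRel G.Adj] {d : ℕ} (hd : ∀ v, G.degree v ≤ d) {S : Finset V}
    (hS : isDomSet G S) : Fintype.card V ≤ (d + 1) * #S := by
  have hcover : (univ : Finset V) ⊆ S.biUnion fun u => insert u (G.neighborFinset u) := by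
    intro v _
    simp only [mem_biUnion, mem_insert, SimpleGraph.mem_neighborFinset]
    by_cases hv : v ∈ S
    · exact ⟨v, hv, Or.inl rfl⟩
    · obtain ⟨u, hu, huv⟩ := hS v hv
      exact ⟨u, hu, Or.inr huv⟩
  calc Fintype.card V
      ≤ #(S.biUnion fun u => insert u (G.neighborFinset u)) := card_le_card hcover
    _ ≤ ∑ u ∈ S, #(insert u (G.neighborFinset u)) := card_biUnion_le
    _ ≤ ∑ _u ∈ S, (d + 1) := sum_le_sum fun u _ => (card_insert_le _ _).trans (by simpa using hd u)
    _ = (d + 1) * #S := by rw [sum_const, smul_eq_mul, mul_comm]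

theorem cycleG_degree_le_two {m : ℕ} [NeZero m] (v : ZMod m) : (cycleG m).degree v ≤ 2 := by
  have hsub : (cycleG m).neighborFinset v ⊆ {v + 1, v - 1} := by
    intro u hu
    obtain ⟨-, h | h⟩ := (SimpleGraph.mem_neighborFinset _ _ _).mp hu
    · simp [← h]
    · simp [← h]
  exact (card_le_card hsub).trans card_le_two

theorem cycleG_adj_natCast {m a b : ℕ} (ha : a < m) (hb : b < m) (hab : a + 1 = b ∨ b + 1 = a) :
    (cycleG m).Adj (a : ZMod m) (b : ZMod m) := by
  refine ⟨?_, ?_⟩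
  · rw [Ne, ZMod.natCast_eq_natCast_iff', Nat.mod_eq_of_lt ha, Nat.mod_eq_of_lt hb]
    omega
  · rcases hab with rfl | rfl
    · right; push_cast; ring
    · left; push_cast; ring

def everyThirdVertex (m : ℕ) : Finset (ZMod m) :=
  (range ((m + 2) / 3)).image fun t => ((min (3 * t + 1) (m - 1) : ℕ) : ZMod m)

theorem card_everyThirdVertex_le (m : ℕ) : #(everyThirdVertex m) ≤ (m + 2) / 3 :=
  card_image_le.trans (card_range _).le

theorem isDomSet_everyThirdVertex (m : ℕ) [NeZero m] :
    isDomSet (cycleG m) (everyThirdVertex m) := by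
  intro v hv
  have hx : v.val < m := ZMod.val_lt v
  rw [← ZMod.natCast_zmod_val v] at hv ⊢
  set u := min (3 * (v.val / 3) + 1) (m - 1)
  have hu : (u : ZMod m) ∈ everyThirdVertex m :=
    mem_image.mpr ⟨v.val / 3, mem_range.mpr (by omega), rfl⟩
  have hne : u ≠ v.val := fun h => hv (h ▸ hu)
  exact ⟨u, hu, cycleG_adj_natCast (by omega) hx (by omega)⟩

theorem exists_isDomSet_cycleG_card_iff {m : ℕ} (hm : m ≠ 0) (j : ℕ) :
    (∃ S : Finset (ZMod m), isDomSet (cycleG m) S ∧ #S = j) ↔ (m + 2) / 3 ≤ j ∧ j ≤ m := by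
  have : NeZero m := ⟨hm⟩
  constructor
  · rintro ⟨S, hS, rfl⟩
    have hlower := hS.card_le_mul cycleG_degree_le_two
    have hupper := card_le_univ S
    rw [ZMod.card] at hlower hupper
    omega
  · rintro ⟨hlo, hhi⟩
    obtain ⟨S, hsub, hcard⟩ := exists_superset_card_eq
      ((card_everyThirdVertex_le m).trans hlo) (by rwa [ZMod.card])
    exact ⟨S, (isDomSet_everyThirdVertex m).mono hsub, hcard⟩

theorem empty_first_iff (n : ℕ) (hn : 4 ≤ n) (i : ℕ) :
    ((¬ ∃ S : Finset (ZMod (n - 1)), isDomSet (cycleG (n - 1)) S ∧ S.card = i - 1) ∧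
     (∃ S : Finset (ZMod (n - 2)), isDomSet (cycleG (n - 2)) S ∧ S.card = i - 1) ∧
     (∃ S : Finset (ZMod (n - 3)), isDomSet (cycleG (n - 3)) S ∧ S.card = i - 1)) ↔
      ∃ k : ℕ, 1 ≤ k ∧ n = 3 * k + 2 ∧ i = k + 1 := by
  rw [exists_isDomSet_cycleG_card_iff (by omega), exists_isDomSet_cycleG_card_iff (by omega),
    exists_isDomSet_cycleG_card_iff (by omega)]
  constructor
  · rintro ⟨h1, h2, h3⟩
    exact ⟨(n - 2) / 3, by omega, by omega, by omega⟩
  · rintro ⟨k, hk, rfl, rfl⟩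
    omega
end
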